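/- Define the symmetrized fourth-power ARAP distortion on the positive orthant of ℝ³ by f₄^Sym(σ) = (1/2)·∑ᵢ₌₁³ (σᵢ − 1)⁴ + (1/2)·(σ₁σ₂σ₃)·∑ₖ₌₁³ (1/σₖ − 1)⁴. Then for every σ in the positive orthant, writing m = min(σ₁,σ₂,σ₃), one has f₄^Sym(σ) ≥ (1 − m)⁴/(2m). Consequently f₄^Sym(σ) tends to +∞ as min(σ₁,σ₂,σ₃) → 0⁺; in particular f₄^Sym blows up along every path in the positive orthant approaching (0,0,0). -/

import Mathlib

/-- The symmetrized fourth-power ARAP distortion in singular values (3D). -/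
noncomputable def f4Sym (a b c : ℝ) : ℝ :=
  (1/2) * ((a - 1)^4 + (b - 1)^4 + (c - 1)^4) +
  (1/2) * (a * b * c) * ((1 / a - 1)^4 + (1 / b - 1)^4 + (1 / c - 1)^4)

/-!
If `m` is the smallest singular value, one term of the reciprocal half of `f4Sym` is
`(1/m - 1)⁴ = (1 - m)⁴ / m⁴`, and its weight `σ₁σ₂σ₃` is at least `m³`; every other term is
nonnegative. The resulting bound `(1 - m)⁴ / (2m)` tends to `+∞` as `m → 0⁺`.
-/

open Filter Topology

lemma half_mul_inv_sub_one_pow_four_le_f4Sym {a b c x : ℝ} (ha : 0 < a) (hb : 0 < b)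
    (hc : 0 < c) (hx : x = a ∨ x = b ∨ x = c) :
    (1/2) * (a * b * c) * (1 / x - 1)^4 ≤ f4Sym a b c := by
  have hA : 0 ≤ (1 / a - 1)^4 := by positivity
  have hB : 0 ≤ (1 / b - 1)^4 := by positivity
  have hC : 0 ≤ (1 / c - 1)^4 := by positivity
  calc (1/2) * (a * b * c) * (1 / x - 1)^4
      ≤ (1/2) * (a * b * c) * ((1 / a - 1)^4 + (1 / b - 1)^4 + (1 / c - 1)^4) := by
        gcongr
        rcases hx with rfl | rfl | rfl <;> linarith
    _ ≤ f4Sym a b c := le_add_of_nonneg_left (by positivity)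

lemma min_pow_three_le_mul {a b c : ℝ} (ha : 0 < a) (hb : 0 < b) (hc : 0 < c) :
    min a (min b c) ^ 3 ≤ a * b * c := by
  have hm : 0 ≤ min a (min b c) := le_min ha.le (le_min hb.le hc.le)
  calc min a (min b c) ^ 3 = min a (min b c) * min a (min b c) * min a (min b c) := by ring
    _ ≤ a * b * c := by gcongr <;> simp

lemma one_sub_pow_four_div_two_mul_eq {m : ℝ} (hm : m ≠ 0) :
    (1 - m)^4 / (2 * m) = (1/2) * m^3 * (1 / m - 1)^4 := by
  field_simp

theorem one_sub_min_pow_four_div_le_f4Sym {a b c : ℝ} (ha : 0 < a) (hb : 0 < b) (hc : 0 < c) :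
    (1 - min a (min b c))^4 / (2 * min a (min b c)) ≤ f4Sym a b c := by
  have hm : 0 < min a (min b c) := lt_min ha (lt_min hb hc)
  have hmem : min a (min b c) = a ∨ min a (min b c) = b ∨ min a (min b c) = c := by
    rcases min_choice a (min b c) with h | h
    · exact .inl h
    · rcases min_choice b c with h' | h' <;> simp_all
  calc (1 - min a (min b c))^4 / (2 * min a (min b c))
      = (1/2) * min a (min b c) ^ 3 * (1 / min a (min b c) - 1)^4 :=
        one_sub_pow_four_div_two_mul_eq hm.ne'
    _ ≤ (1/2) * (a * b * c) * (1 / min a (min b c) - 1)^4 := by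
        gcongr
        exact min_pow_three_le_mul ha hb hc
    _ ≤ f4Sym a b c := half_mul_inv_sub_one_pow_four_le_f4Sym ha hb hc hmem

lemma tendsto_one_sub_pow_four_div_nhdsGT_zero :
    Tendsto (fun m : ℝ => (1 - m)^4 / (2 * m)) (𝓝[>] 0) atTop := by
  have hnum : Tendsto (fun m : ℝ => (1 - m)^4 / 2) (𝓝[>] 0) (𝓝 (1/2)) := by
    exact tendsto_nhdsWithin_of_tendsto_nhds (Continuous.tendsto' (by fun_prop) 0 _ (by norm_num))
  refine (hnum.pos_mul_atTop (by norm_num) tendsto_inv_nhdsGT_zero).congr fun m => ?_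
  ring

/-- With `m = min(σ₁,σ₂,σ₃)`, the symmetrized fourth-power ARAP
distortion satisfies `f₄^Sym(σ) ≥ (1 − m)⁴/(2m)` on the positive orthant, and
consequently blows up as `min(σ₁,σ₂,σ₃) → 0⁺`. -/
theorem statement_15 :
    (∀ a b c : ℝ, 0 < a → 0 < b → 0 < c →
      (1 - min a (min b c))^4 / (2 * min a (min b c)) ≤ f4Sym a b c) ∧
    (∀ C : ℝ, ∃ δ : ℝ, 0 < δ ∧ ∀ a b c : ℝ, 0 < a → 0 < b → 0 < c →
      min a (min b c) < δ → C ≤ f4Sym a b c) := by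
  refine ⟨fun a b c ha hb hc => one_sub_min_pow_four_div_le_f4Sym ha hb hc, fun C => ?_⟩
  obtain ⟨δ, hδ, hsub⟩ := mem_nhdsGT_iff_exists_Ioo_subset.mp
    (tendsto_one_sub_pow_four_div_nhdsGT_zero.eventually_ge_atTop C)
  exact ⟨δ, hδ, fun a b c ha hb hc hlt =>
    (hsub ⟨lt_min ha (lt_min hb hc), hlt⟩).trans (one_sub_min_pow_four_div_le_f4Sym ha hb hc)⟩
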